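/- arXiv:2402.03861 — 3 statements merged into one kernel-verified Lean document; each statement's English description precedes it below -/
import Mathlib

section
/- For every integer N ≥ 1, every integer n with 0 ≤ n ≤ N, and every real t, one has ∫_0^t B_n(s) ds = Σ_{m=0}^{N} B_m(t)·P_{m,n} + δ_{n,N}·(B_{N+1}(t) − B_{N+1}(0))/(N+1), where δ_{n,N} equals 1 if n = N and 0 otherwise. -/
open scoped BigOperators

/-- The `n`-th Bernoulli polynomial evaluated at `t : ℝ`. -/
noncomputable def B (n : ℕ) (t : ℝ) : ℝ :=
  Polynomial.aeval t (Polynomial.bernoulli n)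

/-- The `(N+1) × (N+1)` matrix `P` whose only nonzero entries are
`P 0 j = -B (j+1) 0 / (j+1)` for `0 ≤ j ≤ N-1` and `P (j+1) j = 1/(j+1)` for `0 ≤ j ≤ N-1`. -/
noncomputable def Pmat (N : ℕ) : Matrix (Fin (N + 1)) (Fin (N + 1)) ℝ :=
  Matrix.of fun i j =>
    if (i : ℕ) = 0 then
      (if (j : ℕ) < N then -(B ((j : ℕ) + 1) 0) / ((j : ℕ) + 1) else 0)
    else if (i : ℕ) = (j : ℕ) + 1 then 1 / ((j : ℕ) + 1) else 0

lemma B_eq_bernoulliFun (n : ℕ) (t : ℝ) : B n t = bernoulliFun n t := by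
  simp [B, bernoulliFun, Polynomial.aeval_def, Polynomial.eval_map]

lemma integral_B (n : ℕ) (t : ℝ) :
    (∫ s in (0:ℝ)..t, B n s) = (B (n + 1) t - B (n + 1) 0) / (n + 1) := by
  simp only [B_eq_bernoulliFun]
  rw [intervalIntegral.integral_eq_sub_of_hasDerivAt
      (fun x _ => antideriv_bernoulliFun n x)
      ((Polynomial.continuous _).intervalIntegrable _ _)]
  ring

lemma B_zero (t : ℝ) : B 0 t = 1 := by simp [B]

theorem integral_bernoulli_eq_sum_Pmat (N : ℕ) (hN : 1 ≤ N) (n : Fin (N + 1)) (t : ℝ) :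
    (∫ s in (0:ℝ)..t, B (n : ℕ) s) =
      (∑ m : Fin (N + 1), B (m : ℕ) t * Pmat N m n)
        + (if (n : ℕ) = N then (1:ℝ) else 0) * ((B (N + 1) t - B (N + 1) 0) / (N + 1)) := by
  rw [integral_B]
  by_cases hn : (n : ℕ) = N
  · have hsum : (∑ m : Fin (N + 1), B (m : ℕ) t * Pmat N m n) = 0 := by
      apply Finset.sum_eq_zero
      intro m _
      have h1 : ¬ ((n : ℕ) < N) := by omega
      have h2 : (m : ℕ) ≠ (n : ℕ) + 1 := by have := m.isLt; omega
      simp [Pmat, h1, h2]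
    rw [hsum, hn]
    simp
  · have hlt : (n : ℕ) < N := lt_of_le_of_ne (Nat.lt_succ_iff.mp n.isLt) hn
    have hne : ((n : ℕ) : ℝ) + 1 ≠ 0 := by positivity
    have hsum : (∑ m : Fin (N + 1), B (m : ℕ) t * Pmat N m n)
        = ∑ m : Fin (N + 1),
          ((if m = (0 : Fin (N + 1)) then -(B ((n : ℕ) + 1) 0) / ((n : ℕ) + 1) else 0)
            + (if m = (⟨(n : ℕ) + 1, by omega⟩ : Fin (N + 1)) then
                B ((n : ℕ) + 1) t * (1 / ((n : ℕ) + 1)) else 0)) := by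
      apply Finset.sum_congr rfl
      intro m _
      by_cases hm0 : (m : ℕ) = 0
      · have : m = 0 := Fin.ext hm0
        subst this
        simp [Pmat, hlt, Fin.ext_iff, B_zero, -Fin.val_eq_zero_iff]
      · by_cases hm1 : (m : ℕ) = (n : ℕ) + 1
        · have hme : m = (⟨(n : ℕ) + 1, by omega⟩ : Fin (N + 1)) := Fin.ext hm1
          simp [Pmat, hme, hm0, hm1, Fin.ext_iff, -Fin.val_eq_zero_iff]
        · simp [Pmat, hm0, hm1, Fin.ext_iff, -Fin.val_eq_zero_iff]
    rw [hsum, Finset.sum_add_distrib, Finset.sum_ite_eq', Finset.sum_ite_eq']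
    simp only [Finset.mem_univ, if_true, hn, if_false, zero_mul, add_zero]
    field_simp
    ring
end

section
/- Let Q be a complex n×n matrix whose ℓ∞ operator norm (maximum absolute row sum) satisfies ‖Q‖ < 2π. Then the series Σ_{j=0}^{∞} (−1)^j · (B_j(0)/j!) · Q^j is summable, and its sum S satisfies S · (exp(−Q) − I) = −Q, where exp denotes the matrix exponential and I the n×n identity matrix. In particular, if moreover exp(−Q) − I is invertible, then S = −Q · (exp(−Q) − I)^{−1}. -/
open scoped BigOperators
open Real


lemma abs_bern_le (j : ℕ) : |(bernoulli j : ℝ)| * (2*Real.pi)^j ≤ 4 * j.factorial := by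
  match j with
  | 0 => norm_num
  | 1 =>
      rw [bernoulli_one]
      have h4 := Real.pi_le_four
      have hπ := Real.pi_pos
      have : |((-1/2 : ℚ) : ℝ)| = 1/2 := by norm_num
      rw [this]
      simp only [pow_one, Nat.factorial_one, Nat.cast_one, mul_one]
      nlinarith
  | (k+2) =>
      rcases Nat.even_or_odd (k+2) with he | ho
      · obtain ⟨m, hm⟩ := he
        have hm' : k + 2 = 2 * m := by omega
        have hmne : m ≠ 0 := by omega
        have hs := hasSum_zeta_nat hmne
        have h0 : (0:ℝ) ≤ ((-1 : ℝ) ^ (m + 1) * (2 : ℝ) ^ (2 * m - 1) * π ^ (2 * m) *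
            bernoulli (2 * m) / (Nat.factorial (2 * m))) := hs.nonneg (fun n => by positivity)
        have hle : ((-1 : ℝ) ^ (m + 1) * (2 : ℝ) ^ (2 * m - 1) * π ^ (2 * m) *
            bernoulli (2 * m) / (Nat.factorial (2 * m))) ≤ π^2/6 := by
          refine hasSum_le (fun n => ?_) hs hasSum_zeta_two
          rcases Nat.eq_zero_or_pos n with rfl | hn
          · simp [pow_eq_zero_iff, hmne]
          · have h1 : (1:ℝ) ≤ (n:ℝ) := by exact_mod_cast hn
            have : (n:ℝ)^2 ≤ (n:ℝ)^(2*m) := pow_le_pow_right₀ h1 (by omega)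
            have h2 : (0:ℝ) < (n:ℝ)^2 := by positivity
            exact one_div_le_one_div_of_le h2 this
        have hπ : (0:ℝ) < π := Real.pi_pos
        have habs : (2 : ℝ) ^ (2 * m - 1) * π ^ (2 * m) * |(bernoulli (2 * m) : ℝ)| /
            (Nat.factorial (2 * m)) ≤ 2 := by
          have h2 : |((-1 : ℝ) ^ (m + 1) * (2 : ℝ) ^ (2 * m - 1) * π ^ (2 * m) *
              bernoulli (2 * m) / (Nat.factorial (2 * m)))| ≤ π^2/6 := by
            rw [abs_of_nonneg h0]; exact hle
          rw [abs_div, abs_mul, abs_mul, abs_mul, abs_pow, abs_neg, abs_one, one_pow, one_mul,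
            abs_pow, abs_pow, abs_of_nonneg hπ.le, abs_of_nonneg (by norm_num : (0:ℝ) ≤ 2),
            Nat.abs_cast] at h2
          calc (2 : ℝ) ^ (2 * m - 1) * π ^ (2 * m) * |(bernoulli (2 * m) : ℝ)| /
              (Nat.factorial (2 * m)) ≤ π^2/6 := h2
            _ ≤ 2 := by nlinarith [Real.pi_lt_d2, Real.pi_pos]
        have hfac : (0:ℝ) < ((Nat.factorial (2*m)) : ℝ) := by exact_mod_cast Nat.factorial_pos _
        have h2p : (2:ℝ) ^ (2*m) = 2 * 2 ^ (2*m - 1) := by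
          rw [← pow_succ']
          congr 1
          omega
        have key : |(bernoulli (2*m) : ℝ)| * (2*π)^(2*m) ≤ 4 * (Nat.factorial (2*m)) := by
          rw [mul_pow, h2p]
          rw [div_le_iff₀ hfac] at habs
          nlinarith [abs_nonneg (bernoulli (2*m) : ℝ), pow_nonneg hπ.le (2*m),
            pow_nonneg (by norm_num : (0:ℝ) ≤ 2) (2*m-1)]
        rw [hm']
        exact key
      · have hz : bernoulli (k+2) = 0 := by
          rw [bernoulli_eq_bernoulli'_of_ne_one (by omega)]
          exact bernoulli'_eq_zero_of_odd ho (by omega)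
        rw [hz]
        simp only [Rat.cast_zero, abs_zero, zero_mul]
        positivity



lemma key_sum (N : ℕ) : ∑ j ∈ Finset.range N,
    ((bernoulli j : ℂ) / ((j.factorial : ℂ) * ((N-j).factorial : ℂ))) =
    if N = 1 then 1 else 0 := by
  have h := sum_bernoulli N
  have h2 : ((∑ k ∈ Finset.range N, (N.choose k : ℚ) * bernoulli k : ℚ) : ℂ) =
      ((if N = 1 then (1:ℚ) else 0 : ℚ) : ℂ) := by rw [h]
  push_cast at h2
  have hNfac : ((N.factorial : ℂ)) ≠ 0 := by exact_mod_cast Nat.factorial_ne_zero N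
  have step : ∀ j ∈ Finset.range N,
      (bernoulli j : ℂ) / ((j.factorial : ℂ) * ((N-j).factorial : ℂ)) =
      ((N.choose j : ℂ) * (bernoulli j : ℂ)) / (N.factorial : ℂ) := by
    intro j hj
    have hjN : j ≤ N := (Finset.mem_range.mp hj).le
    rw [Nat.cast_choose ℂ hjN]
    have h1 : ((j.factorial : ℂ)) ≠ 0 := by exact_mod_cast Nat.factorial_ne_zero j
    have h2 : (((N-j).factorial : ℂ)) ≠ 0 := by exact_mod_cast Nat.factorial_ne_zero (N-j)
    field_simp
  rw [Finset.sum_congr rfl step, ← Finset.sum_div, h2]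
  rcases eq_or_ne N 1 with rfl | hN
  · norm_num
  · simp [hN]

lemma key_antidiag (N : ℕ) : ∑ kl ∈ Finset.HasAntidiagonal.antidiagonal N,
    (((-1:ℂ)^kl.1 * (bernoulli kl.1 : ℂ) / (kl.1.factorial : ℂ)) *
      (if kl.2 = 0 then 0 else (-1:ℂ)^kl.2 / (kl.2.factorial : ℂ))) =
    if N = 1 then -1 else 0 := by
  rw [Finset.Nat.sum_antidiagonal_eq_sum_range_succ_mk]
  rw [Finset.sum_range_succ]
  simp only [Nat.sub_self, if_pos rfl, mul_zero, add_zero]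
  have step : ∀ j ∈ Finset.range N,
      (((-1:ℂ)^j * (bernoulli j : ℂ) / (j.factorial : ℂ)) *
        (if N - j = 0 then 0 else (-1:ℂ)^(N-j) / ((N-j).factorial : ℂ))) =
      (-1:ℂ)^N * ((bernoulli j : ℂ) / ((j.factorial : ℂ) * ((N-j).factorial : ℂ))) := by
    intro j hj
    have hjN : j < N := Finset.mem_range.mp hj
    rw [if_neg (by omega)]
    have hpow : (-1:ℂ)^j * (-1:ℂ)^(N-j) = (-1:ℂ)^N := by
      rw [← pow_add]
      congr 1
      omega
    field_simp
    rw [← hpow]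
    ring
  rw [Finset.sum_congr rfl step, ← Finset.mul_sum, key_sum]
  rcases eq_or_ne N 1 with rfl | hN
  · norm_num
  · simp [hN]



lemma B_zero_s11 (j : ℕ) : B j 0 = ((bernoulli j : ℚ) : ℝ) := by
  rw [B, Polynomial.aeval_def, ← Polynomial.eval_map, Polynomial.eval_zero_map,
    Polynomial.bernoulli_eval_zero]
  rfl

lemma B_zero_C (j : ℕ) : ((B j 0 : ℝ) : ℂ) = ((bernoulli j : ℚ) : ℂ) := by
  rw [B_zero_s11]
  push_cast
  rfl

theorem bernoulli_series_of_matrix (n : ℕ) (Q : Matrix (Fin n) (Fin n) ℂ)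
    (hQ : ∀ i : Fin n, (∑ j : Fin n, ‖Q i j‖) < 2 * Real.pi) :
    Summable (fun j : ℕ => (((-1 : ℂ) ^ j * (B j 0 : ℂ) / (j.factorial : ℂ)) • Q ^ j)) ∧
    (∑' j : ℕ, (((-1 : ℂ) ^ j * (B j 0 : ℂ) / (j.factorial : ℂ)) • Q ^ j)) *
        (NormedSpace.exp (-Q) - 1) = -Q ∧
    (IsUnit (NormedSpace.exp (-Q) - 1) →
      (∑' j : ℕ, (((-1 : ℂ) ^ j * (B j 0 : ℂ) / (j.factorial : ℂ)) • Q ^ j)) =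
        -Q * (NormedSpace.exp (-Q) - 1)⁻¹) := by
  letI : SeminormedRing (Matrix (Fin n) (Fin n) ℂ) := Matrix.linftyOpSemiNormedRing
  letI : NormedRing (Matrix (Fin n) (Fin n) ℂ) := Matrix.linftyOpNormedRing
  letI : NormedAlgebra ℂ (Matrix (Fin n) (Fin n) ℂ) := Matrix.linftyOpNormedAlgebra
  have hπ : (0:ℝ) < 2 * Real.pi := by positivity
  -- norm bound on Q
  have hQn : ‖Q‖ < 2 * Real.pi := by
    rw [Matrix.linfty_opNorm_def]
    rcases isEmpty_or_nonempty (Fin n) with he | hne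
    · simp [Finset.univ_eq_empty]
      positivity
    · have : ∀ i : Fin n, ((∑ j : Fin n, ‖Q i j‖₊ : NNReal) : ℝ) < 2 * Real.pi := by
        intro i
        have := hQ i
        have hcast : ((∑ j : Fin n, ‖Q i j‖₊ : NNReal) : ℝ) = ∑ j : Fin n, ‖Q i j‖ := by
          push_cast
          rfl
        rw [hcast]
        exact this
      obtain ⟨i0, hi0⟩ := Finset.exists_mem_eq_sup (Finset.univ : Finset (Fin n))
        Finset.univ_nonempty (fun i : Fin n => ∑ j : Fin n, ‖Q i j‖₊)
      rw [hi0.2]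
      exact this i0
  set x : ℝ := ‖Q‖ / (2 * Real.pi) with hxdef
  have hx0 : 0 ≤ x := by positivity
  have hx1 : x < 1 := (div_lt_one hπ).mpr hQn
  -- coefficient norm bound
  have hcoef : ∀ j : ℕ, ‖(-1 : ℂ) ^ j * (B j 0 : ℂ) / (j.factorial : ℂ)‖ ≤
      4 / (2*Real.pi)^j := by
    intro j
    rw [B_zero_C]
    rw [norm_div, norm_mul, norm_pow, norm_neg, norm_one, one_pow, one_mul]
    have h1 : ‖((bernoulli j : ℚ) : ℂ)‖ = |(bernoulli j : ℝ)| := by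
      rw [show ((bernoulli j : ℚ) : ℂ) = (((bernoulli j : ℚ) : ℝ) : ℂ) from by push_cast; rfl,
        Complex.norm_real, Real.norm_eq_abs]
    have h2 : ‖((j.factorial : ℕ) : ℂ)‖ = (j.factorial : ℝ) := by
      rw [show ((j.factorial : ℕ) : ℂ) = (((j.factorial : ℕ) : ℝ) : ℂ) from by push_cast; rfl,
        Complex.norm_real, Real.norm_eq_abs, abs_of_nonneg (by positivity)]
    rw [h1, h2]
    have hb := abs_bern_le j
    have hf : (0:ℝ) < (j.factorial : ℝ) := by exact_mod_cast Nat.factorial_pos j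
    have hp : (0:ℝ) < (2*Real.pi)^j := by positivity
    rw [div_le_div_iff₀ hf hp]
    calc |(bernoulli j : ℝ)| * (2*Real.pi)^j ≤ 4 * j.factorial := hb
      _ = 4 * (j.factorial : ℝ) := by ring
  -- summability of the main series in norm
  have hsum_norm_f : Summable (fun j : ℕ =>
      ‖((-1 : ℂ) ^ j * (B j 0 : ℂ) / (j.factorial : ℂ)) • Q ^ j‖) := by
    rw [← summable_nat_add_iff 1]
    have hb : ∀ j : ℕ, ‖((-1 : ℂ) ^ (j+1) * (B (j+1) 0 : ℂ) / ((j+1).factorial : ℂ)) • Q ^ (j+1)‖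
        ≤ (4 * x) * x ^ j := by
      intro j
      rw [norm_smul]
      have h1 := hcoef (j+1)
      have h2 : ‖Q ^ (j+1)‖ ≤ ‖Q‖ ^ (j+1) := norm_pow_le' Q (Nat.succ_pos j)
      have h3 : ‖((-1 : ℂ) ^ (j+1) * (B (j+1) 0 : ℂ) / ((j+1).factorial : ℂ))‖ * ‖Q ^ (j+1)‖
          ≤ (4 / (2*Real.pi)^(j+1)) * ‖Q‖ ^ (j+1) := by
        apply mul_le_mul h1 h2 (norm_nonneg _) (by positivity)
      refine h3.trans (le_of_eq ?_)
      rw [hxdef]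
      rw [div_pow]
      field_simp
      ring
    refine Summable.of_nonneg_of_le (fun j => norm_nonneg _) hb ?_
    exact (summable_geometric_of_lt_one hx0 hx1).mul_left (4*x)
  have hsum_f : Summable (fun j : ℕ =>
      ((-1 : ℂ) ^ j * (B j 0 : ℂ) / (j.factorial : ℂ)) • Q ^ j) := hsum_norm_f.of_norm
  -- the exp side
  set g : ℕ → Matrix (Fin n) (Fin n) ℂ :=
    fun k => if k = 0 then 0 else ((-1:ℂ)^k / (k.factorial : ℂ)) • Q ^ k with hgdef
  have hfg : ∀ k : ℕ, (((k.factorial : ℕ) : ℂ))⁻¹ • (-Q)^k =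
      g k + (if k = 0 then (1 : Matrix (Fin n) (Fin n) ℂ) else 0) := by
    intro k
    rcases eq_or_ne k 0 with rfl | hk
    · simp [hgdef]
    · rw [hgdef]
      simp only [if_neg hk, add_zero]
      rw [neg_pow]
      rw [show ((-1 : Matrix (Fin n) (Fin n) ℂ)) = (-1 : ℂ) • 1 from by simp]
      rw [smul_pow, smul_mul_assoc, one_pow, one_mul, smul_smul]
      congr 1
      rw [div_eq_mul_inv]
      ring
  have hsum_norm_exp : Summable (fun k : ℕ => ‖(((k.factorial : ℕ) : ℂ))⁻¹ • (-Q)^k‖) :=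
    NormedSpace.norm_expSeries_summable' (-Q)
  have hsum_norm_g : Summable (fun k : ℕ => ‖g k‖) := by
    refine Summable.of_nonneg_of_le (fun k => norm_nonneg _) (fun k => ?_) hsum_norm_exp
    rcases eq_or_ne k 0 with rfl | hk
    · have hg0 : g 0 = 0 := by rw [hgdef]; simp
      rw [hg0, norm_zero]
      exact norm_nonneg _
    · rw [hfg k, if_neg hk, add_zero]
  have hsum_g : Summable g := hsum_norm_g.of_norm
  have hexp : NormedSpace.exp (-Q) - 1 = ∑' k, g k := by
    have h1 : NormedSpace.exp (-Q) = ∑' k : ℕ, (((k.factorial : ℕ) : ℂ))⁻¹ • (-Q)^k := by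
      rw [NormedSpace.exp_eq_tsum ℂ]
    have h2 : ∑' k : ℕ, (((k.factorial : ℕ) : ℂ))⁻¹ • (-Q)^k =
        (∑' k, g k) + ∑' k : ℕ, (if k = 0 then (1 : Matrix (Fin n) (Fin n) ℂ) else 0) := by
      rw [← Summable.tsum_add hsum_g ((hasSum_ite_eq 0 (1 : Matrix (Fin n) (Fin n) ℂ)).summable)]
      exact tsum_congr hfg
    rw [h1, h2, tsum_ite_eq (0:ℕ) (fun _ => (1 : Matrix (Fin n) (Fin n) ℂ))]
    abel
  -- Cauchy product
  have hmain : (∑' j : ℕ, (((-1 : ℂ) ^ j * (B j 0 : ℂ) / (j.factorial : ℂ)) • Q ^ j)) *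
      (NormedSpace.exp (-Q) - 1) = -Q := by
    rw [hexp]; refine (tsum_mul_tsum_eq_tsum_sum_antidiagonal_of_summable_norm hsum_norm_f hsum_norm_g).trans ?_
    have hinner : ∀ N : ℕ, (∑ kl ∈ Finset.HasAntidiagonal.antidiagonal N,
        (((-1 : ℂ) ^ kl.1 * (B kl.1 0 : ℂ) / (kl.1.factorial : ℂ)) • Q ^ kl.1) * g kl.2) =
        (if N = 1 then -Q else 0) := by
      intro N
      have hterm : ∀ kl ∈ Finset.HasAntidiagonal.antidiagonal N,
          (((-1 : ℂ) ^ kl.1 * (B kl.1 0 : ℂ) / (kl.1.factorial : ℂ)) • Q ^ kl.1) * g kl.2 =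
          ((((-1:ℂ)^kl.1 * (bernoulli kl.1 : ℂ) / (kl.1.factorial : ℂ)) *
            (if kl.2 = 0 then 0 else (-1:ℂ)^kl.2 / (kl.2.factorial : ℂ)))) • Q ^ N := by
        intro kl hkl
        have hN : kl.1 + kl.2 = N := Finset.HasAntidiagonal.mem_antidiagonal.mp hkl
        rw [B_zero_C]
        simp only [hgdef]
        rcases eq_or_ne kl.2 0 with h0 | h0
        · simp [h0]
        · rw [if_neg h0, if_neg h0, smul_mul_smul_comm, ← pow_add, hN]
      rw [Finset.sum_congr rfl hterm, ← Finset.sum_smul, key_antidiag]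
      rcases eq_or_ne N 1 with rfl | hN
      · simp
      · simp [hN]
    exact (tsum_congr hinner).trans (tsum_ite_eq (1:ℕ) (fun _ => -Q))
  refine ⟨hsum_f, hmain, ?_⟩
  intro hU
  have hdet : IsUnit (NormedSpace.exp (-Q) - 1).det :=
    (Matrix.isUnit_iff_isUnit_det _).mp hU
  have hinv : (NormedSpace.exp (-Q) - 1) * (NormedSpace.exp (-Q) - 1)⁻¹ = 1 :=
    Matrix.mul_nonsing_inv _ hdet
  calc (∑' j : ℕ, (((-1 : ℂ) ^ j * (B j 0 : ℂ) / (j.factorial : ℂ)) • Q ^ j))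
      = (∑' j : ℕ, (((-1 : ℂ) ^ j * (B j 0 : ℂ) / (j.factorial : ℂ)) • Q ^ j)) *
        ((NormedSpace.exp (-Q) - 1) * (NormedSpace.exp (-Q) - 1)⁻¹) := by
        rw [hinv, mul_one]
    _ = -Q * (NormedSpace.exp (-Q) - 1)⁻¹ := by rw [← mul_assoc, hmain]
end

section
/- Let N ≥ 2 and k ≥ 1 be integers and let Q be an invertible real k×k matrix. Let Q̂ be the ((N−1)k)×((N−1)k) block matrix, with (N−1)×(N−1) blocks of size k×k indexed 1,…,N−1, whose block (j,j) equals Q/j for 1 ≤ j ≤ N−1, whose block (j,j+1) equals I_k for 1 ≤ j ≤ N−2, and whose remaining blocks are zero. Then Q̂ is invertible, Q̂^{−1} is block upper triangular (all blocks of Q̂^{−1} strictly below the block diagonal are zero), and for every j with 1 ≤ j ≤ N−1, the block of Q̂^{−1} in position (j, N−1) equals (−1)^{N−1−j} · ((N−1)!/(j−1)!) · Q^{−(N−j)}. -/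
open scoped BigOperators

/-- Assemble a block matrix from an `n × n` array of `k × k` blocks. -/
def blockOf {n k : ℕ} (f : Fin n → Fin n → Matrix (Fin k) (Fin k) ℝ) :
    Matrix (Fin n × Fin k) (Fin n × Fin k) ℝ :=
  Matrix.of fun p q => f p.1 q.1 p.2 q.2

/-- The block bidiagonal matrix `Q̂` with blocks indexed `1, …, N-1` (here `0`-indexed by
`Fin (N-1)`, with index `i` standing for `j = i + 1`): block `(j,j) = Q/j`,
block `(j,j+1) = I`, all other blocks zero. -/
noncomputable def Qhat (N k : ℕ) (Q : Matrix (Fin k) (Fin k) ℝ) :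
    Matrix (Fin (N - 1) × Fin k) (Fin (N - 1) × Fin k) ℝ :=
  blockOf fun i i' =>
    if i = i' then (((i : ℕ) + 1 : ℝ))⁻¹ • Q
    else if (i' : ℕ) = (i : ℕ) + 1 then 1
    else 0

lemma blockOf_mul {n k : ℕ} (f g : Fin n → Fin n → Matrix (Fin k) (Fin k) ℝ) :
    blockOf f * blockOf g = blockOf (fun i j => ∑ m, f i m * g m j) := by
  ext p q
  simp only [blockOf, Matrix.mul_apply, Matrix.of_apply, Matrix.sum_apply,
    Fintype.sum_prod_type]

lemma blockOf_one {n k : ℕ} :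
    blockOf (fun i j : Fin n => if i = j then (1 : Matrix (Fin k) (Fin k) ℝ) else 0) = 1 := by
  ext p q
  simp only [blockOf, Matrix.of_apply, Matrix.one_apply,
    apply_ite (fun M : Matrix (Fin k) (Fin k) ℝ => M p.2 q.2), Matrix.one_apply,
    Matrix.zero_apply, Prod.ext_iff]
  split_ifs with h1 h2 h3 <;> simp_all

lemma sum_ite_val {n k : ℕ} (t : ℕ) (g : Fin n → Matrix (Fin k) (Fin k) ℝ) :
    ∑ m : Fin n, (if (m : ℕ) = t then g m else 0) =
      if h : t < n then g ⟨t, h⟩ else 0 := by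
  split_ifs with h
  · have hcond : ∀ m : Fin n, ((m : ℕ) = t) = (m = ⟨t, h⟩) := by
      intro m; simp [Fin.ext_iff]
    simp_rw [hcond]
    simp
  · apply Finset.sum_eq_zero
    intro m _
    have := m.isLt
    exact if_neg (by omega)

theorem Qhat_inv_blocks (N k : ℕ) (hN : 2 ≤ N) (hk : 1 ≤ k)
    (Q : Matrix (Fin k) (Fin k) ℝ) (hQ : IsUnit Q) :
    IsUnit (Qhat N k Q) ∧
    (∀ p q : Fin (N - 1) × Fin k, (q.1 : ℕ) < (p.1 : ℕ) → (Qhat N k Q)⁻¹ p q = 0) ∧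
    (∀ i : Fin (N - 1), ∀ p q : Fin k,
      (Qhat N k Q)⁻¹ (i, p) (⟨N - 2, by omega⟩, q) =
        (((-1 : ℝ) ^ (N - 1 - ((i : ℕ) + 1)) *
            (((N - 1).factorial : ℝ) / (((i : ℕ)).factorial : ℝ))) •
          (Q⁻¹ ^ (N - ((i : ℕ) + 1)))) p q) := by
  have hQd : IsUnit Q.det := (Matrix.isUnit_iff_isUnit_det Q).mp hQ
  have hQQ : Q * Q⁻¹ = 1 := Matrix.mul_nonsing_inv Q hQd
  set Bf : Fin (N - 1) → Fin (N - 1) → Matrix (Fin k) (Fin k) ℝ := fun m j =>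
    if (m : ℕ) ≤ (j : ℕ) then
      ((-1 : ℝ) ^ ((j : ℕ) - (m : ℕ)) *
          ((((j : ℕ) + 1).factorial : ℝ) / (((m : ℕ)).factorial : ℝ))) •
        (Q⁻¹ ^ ((j : ℕ) - (m : ℕ) + 1))
    else 0 with hBf
  set B : Matrix (Fin (N - 1) × Fin k) (Fin (N - 1) × Fin k) ℝ := blockOf Bf with hBdef
  have hblock : ∀ i j : Fin (N - 1),
      (∑ m, (if i = m then (((i : ℕ) + 1 : ℝ))⁻¹ • Q
        else if (m : ℕ) = (i : ℕ) + 1 then 1 else 0) * Bf m j) =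
      (if i = j then (1 : Matrix (Fin k) (Fin k) ℝ) else 0) := by
    intro i j
    have hsplit : ∀ m : Fin (N - 1),
        (if i = m then (((i : ℕ) + 1 : ℝ))⁻¹ • Q
          else if (m : ℕ) = (i : ℕ) + 1 then 1 else 0) * Bf m j =
        (if i = m then ((((i : ℕ) + 1 : ℝ))⁻¹ • Q) * Bf m j else 0) +
        (if (m : ℕ) = (i : ℕ) + 1 then Bf m j else 0) := by
      intro m
      by_cases h1 : i = m
      · have : ¬ ((m : ℕ) = (i : ℕ) + 1) := by subst h1; omega
        simp [h1, this]
      · by_cases h2 : (m : ℕ) = (i : ℕ) + 1 <;> simp [h1, h2]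
    simp_rw [hsplit]
    rw [Finset.sum_add_distrib, Finset.sum_ite_eq, sum_ite_val]
    simp only [Finset.mem_univ, if_true]
    have hiLt := i.isLt
    rcases lt_trichotomy (i : ℕ) (j : ℕ) with hij | hij | hij
    · -- i < j
      have hjLt := j.isLt
      have hin : (i : ℕ) + 1 < N - 1 := by omega
      rw [dif_pos hin]
      have hb1 : Bf i j = ((-1 : ℝ) ^ ((j : ℕ) - (i : ℕ)) *
          ((((j : ℕ) + 1).factorial : ℝ) / (((i : ℕ)).factorial : ℝ))) •
          (Q⁻¹ ^ ((j : ℕ) - (i : ℕ) + 1)) := by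
        rw [hBf]; exact if_pos (by omega)
      have hb2 : Bf ⟨(i : ℕ) + 1, hin⟩ j = ((-1 : ℝ) ^ ((j : ℕ) - ((i : ℕ) + 1)) *
          ((((j : ℕ) + 1).factorial : ℝ) / ((((i : ℕ) + 1)).factorial : ℝ))) •
          (Q⁻¹ ^ ((j : ℕ) - ((i : ℕ) + 1) + 1)) :=
        if_pos (show (i : ℕ) + 1 ≤ (j : ℕ) by omega)
      have d2 : (j : ℕ) - ((i : ℕ) + 1) + 1 = (j : ℕ) - (i : ℕ) := by omega
      have d1 : (j : ℕ) - ((i : ℕ) + 1) = (j : ℕ) - (i : ℕ) - 1 := by omega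
      rw [d2, d1] at hb2
      rw [hb1, hb2]
      have hpow : Q * Q⁻¹ ^ ((j : ℕ) - (i : ℕ) + 1) = Q⁻¹ ^ ((j : ℕ) - (i : ℕ)) := by
        rw [pow_succ' Q⁻¹, ← mul_assoc, hQQ, one_mul]
      rw [if_neg (by intro h; subst h; omega)]
      rw [Matrix.smul_mul, Matrix.mul_smul, hpow, smul_smul, ← add_smul]
      have hsc : ((i : ℕ) + 1 : ℝ)⁻¹ * ((-1 : ℝ) ^ ((j : ℕ) - (i : ℕ)) *
            ((((j : ℕ) + 1).factorial : ℝ) / (((i : ℕ)).factorial : ℝ))) +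
          (-1 : ℝ) ^ ((j : ℕ) - (i : ℕ) - 1) *
            ((((j : ℕ) + 1).factorial : ℝ) / ((((i : ℕ) + 1)).factorial : ℝ)) = 0 := by
        have hd : (j : ℕ) - (i : ℕ) = ((j : ℕ) - (i : ℕ) - 1) + 1 := by omega
        have hfact : ((((i : ℕ) + 1)).factorial : ℝ) = ((i : ℕ) + 1) * ((i : ℕ)).factorial := by
          push_cast [Nat.factorial_succ]; ring
        have h0 : (((i : ℕ)).factorial : ℝ) ≠ 0 := Nat.cast_ne_zero.mpr (Nat.factorial_ne_zero _)
        have h1 : ((i : ℕ) + 1 : ℝ) ≠ 0 := by positivity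
        rw [hd, pow_succ, hfact]
        field_simp
        rw [Nat.add_sub_cancel]; ring
      rw [hsc, zero_smul]
    · -- i = j
      have hij' : i = j := Fin.ext hij
      subst hij'
      rw [if_pos rfl]
      have hb1 : Bf i i = (((((i : ℕ) + 1).factorial : ℝ) / (((i : ℕ)).factorial : ℝ))) •
          (Q⁻¹ ^ 1) := by
        rw [hBf]
        simp
      rw [hb1]
      have hz : (if h : (i : ℕ) + 1 < N - 1 then Bf ⟨(i : ℕ) + 1, h⟩ i else 0) = 0 := by
        split_ifs with h
        · exact if_neg (show ¬((i : ℕ) + 1 ≤ (i : ℕ)) by omega)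
        · rfl
      rw [hz, add_zero, Matrix.smul_mul, Matrix.mul_smul, smul_smul, pow_one, hQQ]
      have hfact : ((((i : ℕ) + 1)).factorial : ℝ) = ((i : ℕ) + 1) * ((i : ℕ)).factorial := by
        push_cast [Nat.factorial_succ]; ring
      have h0 : (((i : ℕ)).factorial : ℝ) ≠ 0 := Nat.cast_ne_zero.mpr (Nat.factorial_ne_zero _)
      have h1 : ((i : ℕ) + 1 : ℝ) ≠ 0 := by positivity
      have : ((i : ℕ) + 1 : ℝ)⁻¹ * ((((i : ℕ) + 1).factorial : ℝ) / (((i : ℕ)).factorial : ℝ)) = 1 := by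
        rw [hfact]; field_simp
      rw [this, one_smul]
    · -- j < i
      have hb1 : Bf i j = 0 := by rw [hBf]; exact if_neg (by omega)
      have hz : (if h : (i : ℕ) + 1 < N - 1 then Bf ⟨(i : ℕ) + 1, h⟩ j else 0) = 0 := by
        split_ifs with h
        · exact if_neg (show ¬((i : ℕ) + 1 ≤ (j : ℕ)) by omega)
        · rfl
      rw [hb1, hz, Matrix.mul_zero, add_zero, if_neg (by intro h; subst h; omega)]
  have hmul : Qhat N k Q * B = 1 := by
    rw [hBdef]
    show blockOf _ * blockOf Bf = 1
    rw [blockOf_mul, ← blockOf_one (n := N - 1) (k := k)]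
    exact congrArg blockOf (funext₂ hblock)
  have hunit : IsUnit (Qhat N k Q) := by
    apply (Matrix.isUnit_iff_isUnit_det _).mpr
    exact Matrix.isUnit_det_of_right_inverse hmul
  have hinv : (Qhat N k Q)⁻¹ = B := Matrix.inv_eq_right_inv hmul
  refine ⟨hunit, ?_, ?_⟩
  · intro p q hlt
    rw [hinv, hBdef]
    show Bf p.1 q.1 p.2 q.2 = 0
    have : Bf p.1 q.1 = 0 := if_neg (show ¬((p.1 : ℕ) ≤ (q.1 : ℕ)) by omega)
    rw [this]
    rfl
  · intro i p q
    rw [hinv, hBdef]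
    show Bf i ⟨N - 2, by omega⟩ p q = _
    have hiLt := i.isLt
    have hbl : Bf i ⟨N - 2, by omega⟩ = ((-1 : ℝ) ^ (N - 2 - (i : ℕ)) *
        (((N - 2 + 1).factorial : ℝ) / (((i : ℕ)).factorial : ℝ))) •
        (Q⁻¹ ^ (N - 2 - (i : ℕ) + 1)) :=
      if_pos (show (i : ℕ) ≤ N - 2 by omega)
    rw [hbl]
    have e2 : N - 2 - (i : ℕ) = N - 1 - ((i : ℕ) + 1) := by omega
    have e3 : N - 2 + 1 = N - 1 := by omega
    have e4 : N - 2 - (i : ℕ) + 1 = N - ((i : ℕ) + 1) := by omega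
    rw [e4, e2, e3]
end
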